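/- Let A be a nonzero absolutely valued algebra over ℂ, i.e. a ℂ-algebra equipped with a norm satisfying ‖xy‖ = ‖x‖·‖y‖ for all x, y. If A contains a left linearly invertible element, then A is isomorphic as a ℂ-algebra to ℂ. -/

import Mathlib

/-!
Extend the left multiplications `L_z` (`z ∈ A`) to the completion `Â`. There `L_a` is `‖a‖` times
an isometry with dense range, hence invertible. Fix `x ∈ A` and put `T = L_a⁻¹ L_x`; for every
`λ`, `λ - T = -L_a⁻¹ L_(x - λa)` is `‖x - λa‖ / ‖a‖` times an isometry. If `x ∉ ℂ a`, these
factors are positive and depend continuously on `λ`, so a perturbation of the inverse shows that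
the spectrum of `T` is open. Being also closed and nonempty, it would be all of `ℂ`, contradicting
its boundedness. Hence `A = ℂ a`, and with `L_a a = μ a` the map `c • a ↦ μ c` is the isomorphism.
-/

open Set UniformSpace

section Completion

variable {𝕜 E F : Type*} [NontriviallyNormedField 𝕜] [NormedAddCommGroup E] [NormedSpace 𝕜 E]
  [NormedAddCommGroup F] [NormedSpace 𝕜 F]

-- Junk unless `f` is bounded.
noncomputable def LinearMap.completion (f : E →ₗ[𝕜] F) : Completion E →L[𝕜] Completion F :=
  ((Completion.toComplL : F →L[𝕜] Completion F).toLinearMap ∘ₗ f).extendOfNorm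
    (Completion.toComplL : E →L[𝕜] Completion E).toLinearMap

namespace LinearMap

variable {f g : E →ₗ[𝕜] F}

theorem completion_coe (hf : ∃ C, ∀ x, ‖f x‖ ≤ C * ‖x‖) (x : E) : f.completion x = f x :=
  extendOfNorm_eq Completion.denseRange_coe
    (by simpa only [coe_comp, Function.comp_apply, ContinuousLinearMap.coe_coe,
      Completion.coe_toComplL, Completion.norm_coe]) x

theorem norm_completion_apply {c : ℝ} (hf : ∀ x, ‖f x‖ = c * ‖x‖) (v : Completion E) :
    ‖f.completion v‖ = c * ‖v‖ := by
  refine Completion.induction_on v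
    (isClosed_eq (by fun_prop) (by fun_prop)) fun x => ?_
  rw [completion_coe ⟨c, fun x => (hf x).le⟩, Completion.norm_coe, Completion.norm_coe, hf]

theorem completion_sub_smul (hf : ∃ C, ∀ x, ‖f x‖ ≤ C * ‖x‖) (hg : ∃ C, ∀ x, ‖g x‖ ≤ C * ‖x‖)
    (c : 𝕜) : (f - c • g).completion = f.completion - c • g.completion := by
  obtain ⟨C, hC⟩ := hf
  obtain ⟨D, hD⟩ := hg
  have hfg : ∃ C, ∀ x, ‖(f - c • g) x‖ ≤ C * ‖x‖ := ⟨C + ‖c‖ * D, fun x => by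
    calc ‖(f - c • g) x‖ ≤ ‖f x‖ + ‖c‖ * ‖g x‖ := by
          simpa only [sub_apply, smul_apply, norm_smul] using norm_sub_le (f x) (c • g x)
      _ ≤ C * ‖x‖ + ‖c‖ * (D * ‖x‖) := by gcongr; exacts [hC x, hD x]
      _ = (C + ‖c‖ * D) * ‖x‖ := by ring⟩
  refine ContinuousLinearMap.coeFn_injective <| Completion.ext (ContinuousLinearMap.continuous _)
    (ContinuousLinearMap.continuous _) fun x => ?_
  simp [completion_coe hfg, completion_coe ⟨C, hC⟩, completion_coe ⟨D, hD⟩, Completion.coe_sub,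
    Completion.coe_smul]

theorem bijective_completion {c : ℝ} (hc : 0 < c) (hf : ∀ x, ‖f x‖ = c * ‖x‖)
    (hsurj : Function.Surjective f) : Function.Bijective f.completion := by
  have hanti : AntilipschitzWith (Real.toNNReal c)⁻¹ f.completion :=
    ContinuousLinearMap.antilipschitz_of_bound _ fun v => by
      rw [NNReal.coe_inv, Real.coe_toNNReal _ hc.le, norm_completion_apply hf,
        inv_mul_cancel_left₀ hc.ne']
  refine ⟨hanti.injective, fun w => ?_⟩
  have hdense : Dense (Set.range f.completion) := by
    refine Completion.denseRange_coe.mono ?_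
    rintro _ ⟨y, rfl⟩
    obtain ⟨x, rfl⟩ := hsurj y
    exact ⟨x, completion_coe ⟨c, fun x => (hf x).le⟩ x⟩
  have hw := hdense w
  rwa [(hanti.isClosed_range f.completion.uniformContinuous).closure_eq] at hw

end LinearMap

end Completion

theorem ContinuousLinearMap.le_inv_norm_inv_of_le_norm_apply {𝕜 E : Type*}
    [NontriviallyNormedField 𝕜] [NormedAddCommGroup E] [NormedSpace 𝕜 E] [Nontrivial E]
    {c : ℝ} (hc : 0 < c) (u : (E →L[𝕜] E)ˣ) (hu : ∀ v, c * ‖v‖ ≤ ‖(u : E →L[𝕜] E) v‖) :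
    c ≤ ‖(↑u⁻¹ : E →L[𝕜] E)‖⁻¹ := by
  have hbound : ‖(↑u⁻¹ : E →L[𝕜] E)‖ ≤ c⁻¹ := by
    refine ContinuousLinearMap.opNorm_le_bound _ (by positivity) fun w => ?_
    rw [inv_mul_eq_div, le_div_iff₀' hc]
    have h := hu ((↑u⁻¹ : E →L[𝕜] E) w)
    rwa [← mul_apply_eq_comp, Units.mul_inv, one_apply_eq_self] at h
  have hpos : 0 < ‖(↑u⁻¹ : E →L[𝕜] E)‖ := norm_pos_iff.2 (Units.ne_zero _)
  exact (le_inv_comm₀ hpos hc).1 hbound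

theorem exists_eq_zero_of_norm_algebraMap_sub_apply {E : Type*} [NormedAddCommGroup E]
    [NormedSpace ℂ E] [CompleteSpace E] [Nontrivial E] (T : E →L[ℂ] E) (f : ℂ → ℝ)
    (hf : ∀ z v, ‖(algebraMap ℂ (E →L[ℂ] E) z - T) v‖ = f z * ‖v‖) : ∃ z, f z = 0 := by
  by_contra! hf0
  obtain ⟨v₀, hv₀⟩ := exists_ne (0 : E)
  have hv₀pos : 0 < ‖v₀‖ := norm_pos_iff.2 hv₀
  have hfpos (z : ℂ) : 0 < f z := by
    refine lt_of_le_of_ne ?_ (hf0 z).symm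
    have := hf z v₀
    nlinarith [norm_nonneg ((algebraMap ℂ (E →L[ℂ] E) z - T) v₀)]
  have hfcont : Continuous f := by
    have hf_eq : f = fun z => ‖z • v₀ - T v₀‖ / ‖v₀‖ := funext fun z => by
      rw [eq_div_iff hv₀pos.ne', ← hf]
      simp [Algebra.algebraMap_eq_smul_one]
    rw [hf_eq]
    fun_prop
  have hopen : IsOpen (spectrum ℂ T) := by
    refine isOpen_iff_forall_mem_open.2 fun l hl => ⟨{μ | ‖l - μ‖ < f μ}, fun μ hμ => ?_,
      isOpen_lt (by fun_prop) hfcont, by simpa using hfpos l⟩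
    by_contra hμT
    obtain ⟨u, hu⟩ := spectrum.notMem_iff.1 hμT
    have hnear : ‖(algebraMap ℂ (E →L[ℂ] E) l - T) - u‖ < ‖(↑u⁻¹ : E →L[ℂ] E)‖⁻¹ := by
      rw [hu, sub_sub_sub_cancel_right, ← map_sub, norm_algebraMap']
      refine hμ.trans_le (ContinuousLinearMap.le_inv_norm_inv_of_le_norm_apply (hfpos μ) u ?_)
      intro v
      rw [hu, hf]
    exact spectrum.mem_iff.1 hl (u.ofNearby _ hnear).isUnit
  have huniv : spectrum ℂ T = univ :=
    IsClopen.eq_univ ⟨spectrum.isClosed T, hopen⟩ (spectrum.nonempty T)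
  exact NormedSpace.unbounded_univ ℂ ℂ (huniv ▸ spectrum.isBounded T)

theorem exists_eq_smul_of_surjective_mulLeft {A : Type*} [NormedAddCommGroup A] [NormedSpace ℂ A]
    (m : A →ₗ[ℂ] A →ₗ[ℂ] A) (hnorm : ∀ x y, ‖m x y‖ = ‖x‖ * ‖y‖) {a : A}
    (ha : Function.Surjective (m a)) (ha0 : a ≠ 0) (x : A) : ∃ c : ℂ, x = c • a := by
  have hbdd (z : A) : ∃ C, ∀ y, ‖m z y‖ ≤ C * ‖y‖ := ⟨‖z‖, fun y => (hnorm z y).le⟩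
  have hnorm_compl (z : A) := (m z).norm_completion_apply (hnorm z)
  have hapos : 0 < ‖a‖ := norm_pos_iff.2 ha0
  have hS := (m a).bijective_completion hapos (hnorm a) ha
  let S := ContinuousLinearEquiv.ofBijective (m a).completion
    (LinearMap.ker_eq_bot.2 hS.1) (LinearMap.range_eq_top.2 hS.2)
  have hS_symm (w : Completion A) : ‖S.symm w‖ = ‖w‖ / ‖a‖ := by
    rw [eq_div_iff hapos.ne', mul_comm, ← hnorm_compl a]
    exact congrArg norm (S.apply_symm_apply w)
  have : Nontrivial (Completion A) := ⟨⟨(a : Completion A), 0, by simpa using ha0⟩⟩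
  -- With `L_w = (m w).completion`, `z - S⁻¹ L_x = -S⁻¹ L_(x - z a)` is `‖x - z a‖ / ‖a‖`
  -- times an isometry.
  obtain ⟨z, hz⟩ := exists_eq_zero_of_norm_algebraMap_sub_apply
    ((S.symm : Completion A →L[ℂ] Completion A) ∘L (m x).completion)
    (fun z => ‖x - z • a‖ / ‖a‖) fun z v => by
      have hpencil : (algebraMap ℂ _ z - (S.symm : Completion A →L[ℂ] Completion A) ∘L
          (m x).completion) v = - S.symm ((m (x - z • a)).completion v) := by
        rw [map_sub, map_smul, LinearMap.completion_sub_smul (hbdd x) (hbdd a)]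
        have hSv : S.symm ((m a).completion v) = v := S.symm_apply_apply v
        simp [Algebra.algebraMap_eq_smul_one, hSv]
      rw [hpencil, norm_neg, hS_symm, hnorm_compl, mul_div_right_comm]
  exact ⟨z, sub_eq_zero.1 (norm_eq_zero.1 ((div_eq_zero_iff.1 hz).resolve_right hapos.ne'))⟩

theorem exists_linearEquiv_map_mul_of_forall_eq_smul {K A : Type*} [Field K] [AddCommGroup A]
    [Module K A] (m : A →ₗ[K] A →ₗ[K] A) {a : A} (hspan : ∀ x, ∃ c : K, x = c • a)
    (haa : m a a ≠ 0) : ∃ e : A ≃ₗ[K] K, ∀ x y, e (m x y) = e x * e y := by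
  have ha0 : a ≠ 0 := by rintro rfl; simp at haa
  obtain ⟨μ, hμ⟩ := hspan (m a a)
  have hμ0 : μ ≠ 0 := by rintro rfl; simp [hμ] at haa
  let E := LinearEquiv.ofBijective (LinearMap.toSpanSingleton K A a)
    ⟨LinearMap.ker_eq_bot.1 (LinearMap.ker_toSpanSingleton K ha0),
      fun x => (hspan x).imp fun c hc => hc.symm⟩
  refine ⟨E.symm.trans (LinearEquiv.smulOfNeZero K K μ hμ0), fun x y => ?_⟩
  obtain ⟨s, rfl⟩ := hspan x
  obtain ⟨t, rfl⟩ := hspan y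
  have hE1 : E.symm a = 1 := E.symm_apply_eq.2 (one_smul K a).symm
  simp only [map_smul, LinearMap.smul_apply, hμ, smul_smul, LinearEquiv.trans_apply, hE1,
    LinearEquiv.smulOfNeZero_apply, smul_eq_mul]
  ring

theorem absolutely_valued_complex_algebra_with_left_inv_iso_complex
    {A : Type*} [NormedAddCommGroup A] [NormedSpace ℂ A] [Nontrivial A]
    (m : A →ₗ[ℂ] A →ₗ[ℂ] A)
    (hnorm : ∀ x y : A, ‖m x y‖ = ‖x‖ * ‖y‖)
    (hinv : ∃ a : A, Function.Bijective (fun x => m a x)) :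
    ∃ e : A ≃ₗ[ℂ] ℂ, ∀ x y : A, e (m x y) = e x * e y := by
  obtain ⟨a, ha⟩ := hinv
  have ha0 : a ≠ 0 := by
    rintro rfl
    obtain ⟨x, hx⟩ := exists_ne (0 : A)
    exact hx (ha.injective (by simp))
  refine exists_linearEquiv_map_mul_of_forall_eq_smul m
    (exists_eq_smul_of_surjective_mulLeft m hnorm ha.2 ha0) ?_
  rw [← norm_ne_zero_iff, hnorm]
  exact mul_ne_zero (norm_ne_zero_iff.2 ha0) (norm_ne_zero_iff.2 ha0)
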